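/- There exists a constant C > 0 such that for every sufficiently large integer R, there exist a function u : ℤ² → ℝ and a potential V : ℤ² → ℝ with the following properties: (i) u ∈ ℓ²(ℤ²); (ii) Δ_d u_j + V_j u_j = 0 for all j ∈ ℤ²; (iii) sup_{j∈ℤ²} |V_j| ≤ C (with C independent of R); (iv) u(0,0) = 1; and (v) u(j₁, j₂) = 0 whenever |j₁| + |j₂ − R| ≤ 2. In particular, a nonzero ℓ² solution of a discrete Schrödinger equation with bounded potential can vanish identically on a ball of fixed radius centered at a point at distance R from the origin. -/

import Mathlib

/-!
In the rotated coordinates `s = j₁ + j₂`, `t = j₁ - j₂` the four lattice neighbours of `j` are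
`(s ± 1, t ± 1)`, so for a product `u = f(s) g(t)` the Laplacian factors as
`Δ_d u = (f(s+1) + f(s-1)) (g(t+1) + g(t-1)) - 4u`. Hence the potential
`V = 4 - (f(s+1) + f(s-1)) (g(t+1) + g(t-1)) / u` is bounded as soon as each profile controls
its neighbour sums, `|f(s+1) + f(s-1)| ≤ c |f(s)|`; at a zero of `f` this forces the neighbour
sum to vanish, which is what allows `u` to have zeros at all.

An odd, exponentially decaying profile `F` with zeros exactly at `0` and `±2` has this property
with `c = 5/2`. For `f(s) = F(s - R)` and `g(t) = F(t + R + 1)`, every point of the diamond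
`|j₁| + |j₂ - R| ≤ 2` is a zero of `f` or of `g`, according to the parity of `j₁ + j₂ - R`,
while `u(0,0) ≠ 0` once `R ≥ 3`, so `u` can be normalised at the origin.
-/

/-- Discrete Laplacian on `ℤ²`. -/
def discreteLap2 (u : ℤ × ℤ → ℝ) (j : ℤ × ℤ) : ℝ :=
  u (j.1 + 1, j.2) + u (j.1 - 1, j.2) + u (j.1, j.2 + 1) + u (j.1, j.2 - 1) - 4 * u j

def NeighborSumBounded (c : ℝ) (f : ℤ → ℝ) : Prop :=
  ∀ s, |f (s + 1) + f (s - 1)| ≤ c * |f s|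

lemma NeighborSumBounded.const_mul_comp_add_right {c : ℝ} {f : ℤ → ℝ}
    (hf : NeighborSumBounded c f) (a : ℝ) (k : ℤ) :
    NeighborSumBounded c (fun s => a * f (s + k)) := fun s => by
  rw [← mul_add, abs_mul, abs_mul, mul_left_comm, add_right_comm, sub_add_eq_add_sub]
  exact mul_le_mul_of_nonneg_left (hf (s + k)) (abs_nonneg a)

lemma summable_sq_const_mul_comp_add_right {f : ℤ → ℝ} (hf : Summable fun s => f s ^ 2)
    (a : ℝ) (k : ℤ) : Summable fun s => (a * f (s + k)) ^ 2 := by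
  simp only [mul_pow]
  exact ((Equiv.addRight k).summable_iff.mpr hf).mul_left _

def diagonalProduct (f g : ℤ → ℝ) (j : ℤ × ℤ) : ℝ := f (j.1 + j.2) * g (j.1 - j.2)

lemma discreteLap2_diagonalProduct (f g : ℤ → ℝ) (j : ℤ × ℤ) :
    discreteLap2 (diagonalProduct f g) j =
      (f (j.1 + j.2 + 1) + f (j.1 + j.2 - 1)) * (g (j.1 - j.2 + 1) + g (j.1 - j.2 - 1)) -
        4 * diagonalProduct f g j := by
  simp only [discreteLap2, diagonalProduct]
  ring_nf

lemma exists_potential_diagonalProduct {a b : ℝ} {f g : ℤ → ℝ} (hf : NeighborSumBounded a f)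
    (hg : NeighborSumBounded b g) (ha : 0 ≤ a) (hb : 0 ≤ b) :
    ∃ V : ℤ × ℤ → ℝ, (∀ j, discreteLap2 (diagonalProduct f g) j + V j * diagonalProduct f g j = 0)
      ∧ ∀ j, |V j| ≤ 4 + a * b := by
  set u := diagonalProduct f g
  set N : ℤ × ℤ → ℝ := fun j =>
    (f (j.1 + j.2 + 1) + f (j.1 + j.2 - 1)) * (g (j.1 - j.2 + 1) + g (j.1 - j.2 - 1))
  have hN (j : ℤ × ℤ) : |N j| ≤ a * b * |u j| :=
    calc |N j| ≤ a * |f (j.1 + j.2)| * (b * |g (j.1 - j.2)|) := by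
          rw [abs_mul]
          exact mul_le_mul (hf _) (hg _) (abs_nonneg _) ((abs_nonneg _).trans (hf _))
      _ = a * b * |u j| := by simp only [u, diagonalProduct, abs_mul]; ring
  -- Where `u j = 0` the division returns `0`, so `V j = 4`; there `N j = 0` by `hN`.
  refine ⟨fun j => 4 - N j / u j, fun j => ?_, fun j => ?_⟩
  · rw [discreteLap2_diagonalProduct]
    change N j - 4 * u j + (4 - N j / u j) * u j = 0
    by_cases hu : u j = 0
    · have hN0 : N j = 0 := abs_nonpos_iff.mp (by simpa [hu] using hN j)
      simp [hu, hN0]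
    · field_simp
      ring
  · calc |4 - N j / u j| ≤ |4| + |N j / u j| := abs_sub _ _
      _ ≤ 4 + a * b := by
        rw [abs_div, abs_of_pos four_pos]
        gcongr
        exact div_le_of_le_mul₀ (abs_nonneg _) (mul_nonneg ha hb) (hN j)

lemma summable_sq_diagonalProduct {f g : ℤ → ℝ} (hf : Summable fun s => f s ^ 2)
    (hg : Summable fun t => g t ^ 2) : Summable fun j => diagonalProduct f g j ^ 2 := by
  have hprod := hf.mul_of_nonneg hg (fun _ => sq_nonneg _) (fun _ => sq_nonneg _)
  have hinj : Function.Injective fun j : ℤ × ℤ => (j.1 + j.2, j.1 - j.2) := by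
    intro j k h
    simp only [Prod.mk.injEq] at h
    ext <;> omega
  simpa [Function.comp_def, diagonalProduct, mul_pow] using hprod.comp_injective hinj

def oddExtension (w : ℕ → ℝ) (s : ℤ) : ℝ := s.sign * w s.natAbs

lemma oddExtension_neg (w : ℕ → ℝ) (s : ℤ) : oddExtension w (-s) = -oddExtension w s := by
  simp [oddExtension]

lemma oddExtension_natCast {w : ℕ → ℝ} (h0 : w 0 = 0) (n : ℕ) : oddExtension w n = w n := by
  rcases n with _ | n
  · simp [oddExtension, h0]
  · simp [oddExtension]; norm_cast

lemma neighborSumBounded_oddExtension {c : ℝ} {w : ℕ → ℝ} (h0 : w 0 = 0)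
    (hw : ∀ n, |w (n + 2) + w n| ≤ c * |w (n + 1)|) :
    NeighborSumBounded c (oddExtension w) := by
  have hcast (n : ℕ) : ((n + 1 : ℕ) : ℤ) + 1 = (n + 2 : ℕ) ∧ ((n + 1 : ℕ) : ℤ) - 1 = n := by
    push_cast; constructor <;> ring
  intro s
  obtain ⟨_ | n, rfl | rfl⟩ := Int.eq_nat_or_neg s
  · simp [oddExtension]
  · simp [oddExtension]
  · rw [(hcast n).1, (hcast n).2, oddExtension_natCast h0, oddExtension_natCast h0,
      oddExtension_natCast h0]
    exact hw n
  · rw [neg_add_eq_sub, ← neg_sub, ← neg_add', (hcast n).1, (hcast n).2, oddExtension_neg,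
      oddExtension_neg, oddExtension_neg, oddExtension_natCast h0, oddExtension_natCast h0,
      oddExtension_natCast h0, ← neg_add, abs_neg, abs_neg, add_comm]
    exact hw n

lemma summable_sq_oddExtension {w : ℕ → ℝ} (hw : Summable fun n => w n ^ 2) :
    Summable fun s => oddExtension w s ^ 2 := by
  have h : Summable fun s : ℤ => w s.natAbs ^ 2 := .of_nat_of_neg (by simpa) (by simpa)
  refine h.of_nonneg_of_le (fun _ => sq_nonneg _) fun s => ?_
  rw [oddExtension, mul_pow]
  refine mul_le_of_le_one_left (sq_nonneg _) ?_
  rcases Int.sign_trichotomy s with h | h | h <;> simp [h]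

/-- The values at `1` and `3` are forced by the cancellation of neighbour sums at the zeros
`0` and `2` of the odd extension. -/
noncomputable def profile : ℕ → ℝ
  | 0 => 0
  | 1 => -1
  | 2 => 0
  | n + 3 => (1 / 2) ^ n

lemma profile_neighborSum_le (n : ℕ) :
    |profile (n + 2) + profile n| ≤ 5 / 2 * |profile (n + 1)| := by
  match n with
  | 0 => norm_num [profile]
  | 1 => norm_num [profile]
  | 2 => norm_num [profile]
  | n + 3 =>
    simp only [profile]
    rw [abs_of_pos (by positivity), abs_of_pos (by positivity)]
    ring_nf
    linarith [pow_pos (by norm_num : (0 : ℝ) < 1 / 2) n]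

lemma summable_sq_profile : Summable fun n => profile n ^ 2 := by
  rw [← summable_nat_add_iff 3]
  refine (summable_geometric_of_lt_one (r := (1 / 2) ^ 2) (by positivity) (by norm_num)).congr
    fun n => ?_
  simp only [profile, ← pow_mul, mul_comm]

lemma profile_ne_zero {n : ℕ} (hn : 3 ≤ n) : profile n ≠ 0 := by
  obtain ⟨k, rfl⟩ := Nat.exists_eq_add_of_le' hn
  simp [profile]

lemma oddExtension_profile_ne_zero {s : ℤ} (h : 3 ≤ |s|) : oddExtension profile s ≠ 0 := by
  rw [Int.abs_eq_natAbs] at h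
  have hs : s ≠ 0 := by rintro rfl; simp at h
  simp [oddExtension, hs, profile_ne_zero (by omega : 3 ≤ s.natAbs)]

lemma oddExtension_profile_eq_zero {s : ℤ} (hs : Even s) (h : |s| ≤ 2) :
    oddExtension profile s = 0 := by
  have : s.natAbs = 0 ∨ s.natAbs = 2 := by
    rw [Int.abs_eq_natAbs] at h
    rcases hs with ⟨r, rfl⟩
    omega
  rcases this with h | h <;> simp [oddExtension, h, profile]

lemma oddExtension_profile_mul_eq_zero {x y : ℤ} (h : |x| + |y| ≤ 2) :
    oddExtension profile (x + y) * oddExtension profile (x - y + 1) = 0 := by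
  have hparity : (Even (x + y) ∧ |x + y| ≤ 2) ∨ (Even (x - y + 1) ∧ |x - y + 1| ≤ 2) := by
    simp only [Int.even_iff, Int.abs_eq_natAbs] at *
    omega
  rcases hparity with ⟨hs, hs2⟩ | ⟨ht, ht2⟩
  · rw [oddExtension_profile_eq_zero hs hs2, zero_mul]
  · rw [oddExtension_profile_eq_zero ht ht2, mul_zero]

theorem discrete_counterexample :
    ∃ C : ℝ, 0 < C ∧ ∃ R₁ : ℕ, ∀ R : ℕ, R₁ ≤ R →
      ∃ u V : ℤ × ℤ → ℝ,
        Summable (fun j => (u j) ^ 2) ∧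
        (∀ j : ℤ × ℤ, discreteLap2 u j + V j * u j = 0) ∧
        (∀ j : ℤ × ℤ, |V j| ≤ C) ∧
        u (0, 0) = 1 ∧
        (∀ j : ℤ × ℤ, |j.1| + |j.2 - (R : ℤ)| ≤ 2 → u j = 0) := by
  set F := oddExtension profile
  have hF : NeighborSumBounded (5 / 2) F :=
    neighborSumBounded_oddExtension rfl profile_neighborSum_le
  have hF2 : Summable fun s => F s ^ 2 := summable_sq_oddExtension summable_sq_profile
  refine ⟨4 + 5 / 2 * (5 / 2), by norm_num, 3, fun R hR => ?_⟩
  have hf0 : F (-R) ≠ 0 := oddExtension_profile_ne_zero (by rw [abs_neg]; exact_mod_cast hR)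
  have hg0 : F (R + 1) ≠ 0 := oddExtension_profile_ne_zero (by rw [abs_of_pos (by omega)]; omega)
  set f := fun s => (F (-R))⁻¹ * F (s + -R)
  set g := fun t => (F (R + 1))⁻¹ * F (t + (R + 1))
  obtain ⟨V, hV, hVC⟩ := exists_potential_diagonalProduct (hF.const_mul_comp_add_right _ (-R))
    (hF.const_mul_comp_add_right _ (R + 1)) (by norm_num) (by norm_num)
  refine ⟨diagonalProduct f g, V, summable_sq_diagonalProduct
    (summable_sq_const_mul_comp_add_right hF2 _ _) (summable_sq_const_mul_comp_add_right hF2 _ _),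
    hV, hVC, by simp [diagonalProduct, f, g, hf0, hg0], fun j hj => ?_⟩
  simp only [diagonalProduct, f, g, F]
  rw [show j.1 + j.2 + -(R : ℤ) = j.1 + (j.2 - R) by ring,
    show j.1 - j.2 + (R + 1) = j.1 - (j.2 - R) + 1 by ring, mul_mul_mul_comm,
    oddExtension_profile_mul_eq_zero hj, mul_zero]
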